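/- There is an absolute constant K > 0 such that for all N > 0 and all t with −N/4 < t < N/4 and t ≠ 0, the quantity R := N − 4t²/N − f(v_N − (t,−t)) satisfies 0 < R ≤ K·t⁴/N³, where v_N = (N/4, N/4). In particular f(v_N − (t,−t)) = N − 4t²/N − R with R strictly positive for all such t. -/

import Mathlib

open MeasureTheory ProbabilityTheory

noncomputable section

/-- The number of steps in an up-right lattice path from `u` to `v`. -/
def pathLen (u v : ℤ × ℤ) : ℕ := (v.1 - u.1 + (v.2 - u.2)).toNat

/-- `γ` is an up-right lattice path from `u` to `v`, recorded as the sequence of its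
vertices `γ 0 = u, γ 1, …, γ (pathLen u v) = v`, each step being `+(1,0)` or `+(0,1)`. -/
def IsUpRightPath (u v : ℤ × ℤ) (γ : ℕ → ℤ × ℤ) : Prop :=
  γ 0 = u ∧ γ (pathLen u v) = v ∧
    ∀ k < pathLen u v, γ (k + 1) = γ k + (1, 0) ∨ γ (k + 1) = γ k + (0, 1)

/-- The weight of a path: the sum of the environment weights of its vertices. -/
def pathWeight (env : ℤ × ℤ → ℝ) (u v : ℤ × ℤ) (γ : ℕ → ℤ × ℤ) : ℝ :=
  ∑ k ∈ Finset.range (pathLen u v + 1), env (γ k)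

/-- The point-to-point last passage time from `u` to `v` in the environment `env`:
the maximum of `pathWeight` over all up-right paths from `u` to `v`. -/
def ppTime (env : ℤ × ℤ → ℝ) (u v : ℤ × ℤ) : ℝ :=
  sSup {S | ∃ γ : ℕ → ℤ × ℤ, IsUpRightPath u v γ ∧ pathWeight env u v γ = S}

/-- The characteristic-direction endpoint `v_N = ((1-ρ)² N, ρ² N)`. -/
def vN (ρ : ℝ) (N : ℕ) : ℤ × ℤ := (⌊(1 - ρ) ^ 2 * N⌋, ⌊ρ ^ 2 * N⌋)

/-- The last index at which a path touches the union of the coordinate axes. -/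
def exitIndex (u v : ℤ × ℤ) (γ : ℕ → ℤ × ℤ) : ℕ :=
  sSup {k | k ≤ pathLen u v ∧ ((γ k).1 = 0 ∨ (γ k).2 = 0)}

/-- The signed exit coordinate of a path: the nonzero coordinate of the last point of the
path lying on the coordinate axes, positive on the `x`-axis, negative on the `y`-axis. -/
def exitCoord (u v : ℤ × ℤ) (γ : ℕ → ℤ × ℤ) : ℤ :=
  if (γ (exitIndex u v γ)).2 = 0 then (γ (exitIndex u v γ)).1
  else -(γ (exitIndex u v γ)).2

/-- The boundary representation of stationary exponential LPP with density `ρ`: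
an independent field on `ℤ²` with `ω'_{(0,0)} = 0`, `Exp(1)` weights in the open positive
quadrant, `Exp(1-ρ)` weights on the positive `x`-axis and `Exp(ρ)` weights on the positive
`y`-axis. -/
structure BoundaryEnv (ρ : ℝ) {Ω : Type} [MeasurableSpace Ω] (P : Measure Ω) where
  env : ℤ × ℤ → Ω → ℝ
  meas : ∀ v, Measurable (env v)
  indep : iIndepFun env P
  origin_zero : ∀ᵐ ω ∂P, env (0, 0) ω = 0
  bulk : ∀ v : ℤ × ℤ, 0 < v.1 → 0 < v.2 → P.map (env v) = expMeasure 1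
  xAxis : ∀ i : ℤ, 1 ≤ i → P.map (env (i, 0)) = expMeasure (1 - ρ)
  yAxis : ∀ j : ℤ, 1 ≤ j → P.map (env (0, j)) = expMeasure ρ

/-- The stationary passage time `G¹_stat(v)` in the boundary representation. -/
def BoundaryEnv.Gstat {ρ : ℝ} {Ω : Type} [MeasurableSpace Ω] {P : Measure Ω}
    (B : BoundaryEnv ρ P) (v : ℤ × ℤ) (ω : Ω) : ℝ :=
  ppTime (fun w => B.env w ω) (0, 0) v

/-- The point-to-line representation of stationary exponential LPP with density `ρ`:
an independent field with `Exp(1)` weights strictly above the antidiagonal, zero weights on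
and below it, together with independent boundary variables `τ_s ~ Exp(1-ρ)`,
`ψ_s ~ Exp(ρ)` indexed by the antidiagonal. -/
structure PtLineEnv (ρ : ℝ) {Ω : Type} [MeasurableSpace Ω] (P : Measure Ω) where
  env : ℤ × ℤ → Ω → ℝ
  tau : ℤ → Ω → ℝ
  psi : ℤ → Ω → ℝ
  meas_env : ∀ v, Measurable (env v)
  meas_tau : ∀ s, Measurable (tau s)
  meas_psi : ∀ s, Measurable (psi s)
  indep : iIndepFun (Sum.elim env (Sum.elim tau psi)) P
  bulk : ∀ v : ℤ × ℤ, 0 < v.1 + v.2 → P.map (env v) = expMeasure 1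
  line_zero : ∀ v : ℤ × ℤ, v.1 + v.2 ≤ 0 → ∀ᵐ ω ∂P, env v ω = 0
  tau_law : ∀ s : ℤ, P.map (tau s) = expMeasure (1 - ρ)
  psi_law : ∀ s : ℤ, P.map (psi s) = expMeasure ρ

/-- The boundary weight function `T` on the antidiagonal `{x + y = 0}`, evaluated at the
point `(t, -t)`. -/
def PtLineEnv.T {ρ : ℝ} {Ω : Type} [MeasurableSpace Ω] {P : Measure Ω}
    (L : PtLineEnv ρ P) (t : ℤ) (ω : Ω) : ℝ :=
  if 0 ≤ t then ∑ s ∈ Finset.Icc 1 t, (L.tau s ω - L.psi s ω)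
  else -∑ s ∈ Finset.Icc t (-1), (L.tau s ω - L.psi s ω)

/-- The stationary passage time `G²_stat(v)` in the point-to-line representation:
`max_{u ∈ {x+y=0}} (T(u) + G(u,v))`. -/
def PtLineEnv.Gstat2 {ρ : ℝ} {Ω : Type} [MeasurableSpace Ω] {P : Measure Ω}
    (L : PtLineEnv ρ P) (v : ℤ × ℤ) (ω : Ω) : ℝ :=
  sSup {S | ∃ t : ℤ, ((t, -t) : ℤ × ℤ) ≤ v ∧
    L.T t ω + ppTime (fun w => L.env w ω) (t, -t) v = S}

/-- The shape function `f((m,n)) = (√m + √n)²`. -/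
def fF (p : ℝ × ℝ) : ℝ := (Real.sqrt p.1 + Real.sqrt p.2) ^ 2

/-- `f` evaluated at a lattice point. -/
def fZ (p : ℤ × ℤ) : ℝ := fF ((p.1 : ℝ), (p.2 : ℝ))

/-- `g(x) = x/(1-ρ)` for `x ≥ 0` and `g(x) = -x/ρ` for `x < 0`. -/
def gF (ρ x : ℝ) : ℝ := if 0 ≤ x then x / (1 - ρ) else -x / ρ

/-- `h(x) = ρ x²/(4(1-ρ)³)` for `x ≥ 0` and `h(x) = (1-ρ) x²/(4ρ³)` for `x < 0`. -/
def hF (ρ x : ℝ) : ℝ := if 0 ≤ x then ρ * x ^ 2 / (4 * (1 - ρ) ^ 3)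
  else (1 - ρ) * x ^ 2 / (4 * ρ ^ 3)

/-- For `x > 0`, `𝐱 = (x, 0)`; for `x < 0`, `𝐱 = (0, -x)`. -/
def bpt (x : ℤ) : ℤ × ℤ := if 0 ≤ x then (x, 0) else (0, -x)

/-- For `x > 0`, `𝐱↑ = (x, 1)`; for `x < 0`, `𝐱↑ = (1, -x)`. -/
def bptUp (x : ℤ) : ℤ × ℤ := if 0 ≤ x then (x, 1) else (1, -x)

/-- Real version of `𝐱↑`. -/
def bptUpR (x : ℝ) : ℝ × ℝ := if 0 ≤ x then (x, 1) else (1, -x)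

theorem fF_eq_add_add_two_mul_sqrt {a b : ℝ} (ha : 0 ≤ a) (hb : 0 ≤ b) :
    fF (a, b) = a + b + 2 * Real.sqrt (a * b) := by
  rw [fF, add_sq, Real.sq_sqrt ha, Real.sq_sqrt hb, Real.sqrt_mul ha]
  ring

/-- Rationalising: `c - √x = (c² - x) / (c + √x)`. -/
theorem sub_sqrt_pos_and_le_div {c x : ℝ} (hc : 0 < c) (hx : 0 ≤ x) (hxc : x < c ^ 2) :
    0 < c - Real.sqrt x ∧ c - Real.sqrt x ≤ (c ^ 2 - x) / c := by
  have hsqrt : Real.sqrt x < c := (Real.sqrt_lt' hc).2 hxc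
  refine ⟨sub_pos.2 hsqrt, ?_⟩
  rw [le_div_iff₀ hc]
  nlinarith [Real.sq_sqrt hx, Real.sqrt_nonneg x]

/-- Writing `c = N/4 - 2t²/N`, one has `(N/4 - t)(N/4 + t) = c² - 4t⁴/N²`, so the remainder is
`2(c - √(c² - 4t⁴/N²))`, which lies between `0` and `2 (4t⁴/N²) / c`, and `c ≥ N/8`. -/
theorem stmt16 :
    ∃ K > (0:ℝ), ∀ N : ℝ, 0 < N → ∀ t : ℝ, -N/4 < t → t < N/4 → t ≠ 0 →
      0 < N - 4 * t ^ 2 / N - fF ((N/4 - t, N/4 + t) : ℝ × ℝ) ∧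
      N - 4 * t ^ 2 / N - fF ((N/4 - t, N/4 + t) : ℝ × ℝ) ≤ K * t ^ 4 / N ^ 3 := by
  refine ⟨64, by norm_num, fun N hN t ht₁ ht₂ ht₀ => ?_⟩
  set c := N / 4 - 2 * t ^ 2 / N
  set x := (N / 4 - t) * (N / 4 + t)
  have hc : N / 8 ≤ c := by
    have : 2 * t ^ 2 / N ≤ N / 8 := by
      rw [div_le_div_iff₀ hN (by norm_num)]; nlinarith
    simp only [c]; linarith
  have hR : N - 4 * t ^ 2 / N - fF ((N/4 - t, N/4 + t) : ℝ × ℝ) = 2 * (c - Real.sqrt x) := by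
    rw [fF_eq_add_add_two_mul_sqrt (by linarith) (by linarith)]
    ring
  have hgap : c ^ 2 - x = 4 * t ^ 4 / N ^ 2 := by
    simp only [c, x]; field_simp; ring
  have hgap_pos : 0 < 4 * t ^ 4 / N ^ 2 := by positivity
  obtain ⟨hpos, hle⟩ := sub_sqrt_pos_and_le_div (c := c) (x := x) (by linarith)
    (mul_nonneg (by linarith) (by linarith)) (by linarith)
  rw [hR]
  refine ⟨by linarith, ?_⟩
  calc 2 * (c - Real.sqrt x) ≤ 2 * (4 * t ^ 4 / N ^ 2 / c) := by rw [← hgap]; gcongr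
    _ ≤ 2 * (4 * t ^ 4 / N ^ 2 / (N / 8)) := by gcongr
    _ = 64 * t ^ 4 / N ^ 3 := by field_simp; ring

end
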